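/- For every context-free language L over an alphabet Σ, there exists a restricted PDA whose language is exactly L; in particular, every context-free language is recognized by a real-time nondeterministic pushdown automaton, one in which every transition scans exactly one input symbol. -/

import Mathlib

/-!
Suppose a finite family of languages `ℒ s` without the empty word is such that for every word
`a z ∈ ℒ s` the suffix `z` lies in a product of at most `B` of the `ℒ`'s all of whose words `z'`
still satisfy `a z' ∈ ℒ s`. Then the rules `s → a u` of such products form a grammar in Greibach
normal form generating each `ℒ s`, and a real-time pushdown automaton runs its leftmost
derivations: the state holds the first at most `B` symbols of the sentential form, the stack the
rest in blocks of at most `B` symbols.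

For a context-free grammar whose right-hand sides have length at most `M`, such a family is given
by the nonempty words derived from a single symbol `σ` together with, for pairs `σ, τ`, the nonempty
words `w` such that `σ` derives `τ w` along a path of a derivation tree whose left siblings are all
nullable. Following this path from `σ` down to the first letter `a` of a derived word shows that
the bound `B = 2 M + 2` works.
-/

/-- A *restricted PDA*: a bottom-marked nondeterministic pushdown automaton each of whose
transitions scans exactly one input symbol and either pushes a single symbol on top of the
current top symbol (`q, a, x → r, xy`), replaces the top symbol (`q, a, x → r, y`), or pops
the top symbol (`q, a, x → r, ε`).  Stacks are lists whose head is the top of the stack. -/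
structure RestrictedPDA (Q T S : Type) where
  /-- The start state. -/
  start : Q
  /-- The designated bottom symbol `⊥`. -/
  bot : S
  /-- `pushTrans q a x r y` is the transition `q, a, x → r, xy`. -/
  pushTrans : Q → T → S → Q → S → Prop
  /-- `replTrans q a x r y` is the transition `q, a, x → r, y`. -/
  replTrans : Q → T → S → Q → S → Prop
  /-- `popTrans q a x r` is the transition `q, a, x → r, ε`. -/
  popTrans : Q → T → S → Q → Prop
  /-- The set of accept states. -/
  accept : Set Q

/-- A single step of a restricted PDA, scanning one input symbol. -/
inductive RestrictedPDA.Step {Q T S : Type} (M : RestrictedPDA Q T S) :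
    Q × List S → T → Q × List S → Prop
  | push {q : Q} {a : T} {x : S} {r : Q} {y : S} {β : List S} :
      M.pushTrans q a x r y → RestrictedPDA.Step M (q, x :: β) a (r, y :: x :: β)
  | repl {q : Q} {a : T} {x : S} {r : Q} {y : S} {β : List S} :
      M.replTrans q a x r y → RestrictedPDA.Step M (q, x :: β) a (r, y :: β)
  | pop {q : Q} {a : T} {x : S} {r : Q} {β : List S} :
      M.popTrans q a x r → RestrictedPDA.Step M (q, x :: β) a (r, β)

/-- `M.Scans c w c'` means that `M` can go from configuration `c` to configuration `c'` by a
run scanning exactly the string `w` (one input symbol per step). -/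
inductive RestrictedPDA.Scans {Q T S : Type} (M : RestrictedPDA Q T S) :
    Q × List S → List T → Q × List S → Prop
  | refl (c : Q × List S) : RestrictedPDA.Scans M c [] c
  | step {c c' c'' : Q × List S} {a : T} {w : List T} :
      M.Step c a c' → RestrictedPDA.Scans M c' w c'' → RestrictedPDA.Scans M c (a :: w) c''

/-- The language of a restricted PDA: it accepts `w` iff some run starting from the start
state with stack containing only `⊥` and scanning `w` ends in an accept state with `⊥` as
the top stack symbol. -/
def RestrictedPDA.language {Q T S : Type} (M : RestrictedPDA Q T S) : Language T :=
  {w | ∃ r ∈ M.accept, ∃ β : List S, M.Scans (M.start, [M.bot]) w (r, M.bot :: β)}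

namespace GNF

variable {T N : Type} (R : N → T → List N → Prop)

/- `R s a u` is read as the rule `s → a u` of a grammar in Greibach normal form over the
nonterminals `N`; `Derives R v w` is a leftmost derivation of the word `w` from `v`. -/

inductive Step : List N → T → List N → Prop
  | head {s : N} {a : T} {u v : List N} : R s a u → Step (s :: v) a (u ++ v)

inductive Derives : List N → List T → Prop
  | nil : Derives [] []
  | head {v v' : List N} {a : T} {w : List T} : Step R v a v' → Derives v' w → Derives v (a :: w)

variable {R}

lemma step_cons_iff {s : N} {v v' : List N} {a : T} :
    Step R (s :: v) a v' ↔ ∃ u, R s a u ∧ v' = u ++ v :=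
  ⟨fun ⟨hr⟩ => ⟨_, hr, rfl⟩, fun ⟨_, hr, h⟩ => h ▸ Step.head hr⟩

lemma Step.append_right {v v' : List N} {a : T} (h : Step R v a v') (t : List N) :
    Step R (v ++ t) a (v' ++ t) := by
  obtain ⟨hr⟩ := h
  simpa using Step.head (v := _ ++ t) hr

end GNF

section ProdCover

variable {T N : Type} (ℒ : N → Language T)

def ProdCover (k : ℕ) (K : Language T) (z : List T) : Prop :=
  ∃ u : List N, u.length ≤ k ∧ z ∈ (u.map ℒ).prod ∧ (u.map ℒ).prod ≤ K

variable {ℒ}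

lemma ProdCover.mono {k k' : ℕ} {K K' : Language T} {z : List T} (h : ProdCover ℒ k K z)
    (hk : k ≤ k') (hK : ∀ z ∈ K, z ∈ K') : ProdCover ℒ k' K' z :=
  let ⟨u, hu, hz, huK⟩ := h
  ⟨u, hu.trans hk, hz, fun z hz => hK z (huK hz)⟩

lemma ProdCover.append {k₁ k₂ : ℕ} {K₁ K₂ : Language T} {z₁ z₂ : List T}
    (h₁ : ProdCover ℒ k₁ K₁ z₁) (h₂ : ProdCover ℒ k₂ K₂ z₂) :
    ProdCover ℒ (k₁ + k₂) (K₁ * K₂) (z₁ ++ z₂) :=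
  let ⟨u₁, hu₁, hz₁, hK₁⟩ := h₁
  let ⟨u₂, hu₂, hz₂, hK₂⟩ := h₂
  ⟨u₁ ++ u₂, by simp; omega, by simpa using Language.append_mem_mul hz₁ hz₂,
    by simpa using mul_le_mul' hK₁ hK₂⟩

lemma ProdCover.nil {k : ℕ} {K : Language T} (h : [] ∈ K) : ProdCover ℒ k K [] :=
  ⟨[], Nat.zero_le k, (Language.mem_one _).mpr rfl, by rintro w (rfl : w = []); exact h⟩

lemma prodCover_one {n : N} {K : Language T} (hn : ℒ n = K - 1) {z : List T} (hz : z ∈ K) :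
    ProdCover ℒ 1 K z := by
  by_cases hz_nil : z = []
  · exact hz_nil ▸ ProdCover.nil (hz_nil ▸ hz)
  · refine ⟨[n], by simp, ?_, ?_⟩ <;> simp [hn, Language.mem_sub, Language.mem_one, hz, hz_nil]

end ProdCover

namespace GNF

variable {T N : Type} {ℒ : N → Language T} {B : ℕ}

variable (ℒ B) in
def quotientRules (s : N) (a : T) (u : List N) : Prop :=
  u.length ≤ B ∧ (u.map ℒ).prod ≤ (ℒ s).leftQuotient [a]

lemma mem_prod_of_derives {v : List N} {w : List T} (h : Derives (quotientRules ℒ B) v w) :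
    w ∈ (v.map ℒ).prod := by
  induction h with
  | nil => exact (Language.mem_one _).mpr rfl
  | head hstep _ ih =>
    obtain ⟨⟨-, hu⟩⟩ := hstep
    simp only [List.map_append, List.prod_append, Language.mem_mul] at ih
    obtain ⟨z, hz, y, hy, rfl⟩ := ih
    simpa using Language.append_mem_mul ((Language.mem_leftQuotient _ _).mp (hu hz)) hy

lemma derives_of_mem_prod (hε : ∀ s, [] ∉ ℒ s)
    (hcover : ∀ s a z, a :: z ∈ ℒ s → ProdCover ℒ B ((ℒ s).leftQuotient [a]) z)
    {v : List N} {w : List T} (h : w ∈ (v.map ℒ).prod) : Derives (quotientRules ℒ B) v w := by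
  induction w generalizing v with
  | nil =>
    obtain _ | ⟨s, v⟩ := v
    · exact .nil
    · simp only [List.map_cons, List.prod_cons, Language.mem_mul, List.append_eq_nil_iff] at h
      obtain ⟨x, hx, y, -, rfl, -⟩ := h
      exact absurd hx (hε s)
  | cons a w ih =>
    obtain _ | ⟨s, v⟩ := v
    · simp [Language.mem_one] at h
    simp only [List.map_cons, List.prod_cons, Language.mem_mul] at h
    obtain ⟨_ | ⟨a', z⟩, hx, y, hy, hxy⟩ := h
    · exact absurd hx (hε s)
    obtain ⟨rfl, rfl⟩ := List.cons.inj hxy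
    obtain ⟨u, hu_len, hz, hu⟩ := hcover s _ z hx
    refine .head (.head (v := v) ⟨hu_len, hu⟩) (ih ?_)
    simpa using Language.append_mem_mul hz hy

theorem derives_quotientRules_iff (hε : ∀ s, [] ∉ ℒ s)
    (hcover : ∀ s a z, a :: z ∈ ℒ s → ProdCover ℒ B ((ℒ s).leftQuotient [a]) z)
    {v : List N} {w : List T} : Derives (quotientRules ℒ B) v w ↔ w ∈ (v.map ℒ).prod :=
  ⟨mem_prod_of_derives, derives_of_mem_prod hε hcover⟩

abbrev Block (N : Type) (B : ℕ) : Type := {l : List N // l.length ≤ B}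

namespace Block

instance [Finite N] : Finite (Block N B) := (List.finite_length_le N B).to_subtype

def nil : Block N B := ⟨[], Nat.zero_le B⟩

lemma ne_nil_iff {b : Block N B} : b ≠ nil ↔ b.1 ≠ [] :=
  not_congr ⟨fun h => h ▸ rfl, fun h => Subtype.ext h⟩

def flatten (bs : List (Block N B)) : List N := bs.flatMap Subtype.val

@[simp] lemma flatten_nil : flatten ([] : List (Block N B)) = [] := rfl

@[simp] lemma flatten_cons (b : Block N B) (bs : List (Block N B)) :
    flatten (b :: bs) = b.1 ++ flatten bs := rfl

end Block

open Block

def stateList (s₀ : N) : Option (Block N B) → List N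
  | none => [s₀]
  | some b => b.1

/-- The state holds the first at most `B` symbols of the sentential form (`[s₀]` in the start
state, accepting iff `e`), the stack the rest in nonempty blocks of at most `B` symbols above the
empty block `⊥`. -/
def toPDA (R : N → T → List N → Prop) (B : ℕ) (s₀ : N) (e : Prop) :
    RestrictedPDA (Option (Block N B)) T (Block N B) where
  start := none
  bot := nil
  pushTrans q a _ r y := ∃ b, r = some b ∧ y ≠ nil ∧ Step R (stateList s₀ q) a (b.1 ++ y.1)
  replTrans q a x r y := y = x ∧ ∃ b, r = some b ∧ Step R (stateList s₀ q) a b.1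
  popTrans q a x r := ∃ b, r = some b ∧ x ≠ nil ∧ Step R (stateList s₀ q ++ x.1) a b.1
  accept := {q | q.elim e fun b => b.1 = []}

variable {R : N → T → List N → Prop} {s₀ : N} {e : Prop}

def Shaped (st : List (Block N B)) : Prop := ∃ bs, st = bs ++ [nil] ∧ nil ∉ bs

def content (s₀ : N) (c : Option (Block N B) × List (Block N B)) : List N :=
  stateList s₀ c.1 ++ flatten c.2

lemma Shaped.eq_nil_of_cons_nil {β : List (Block N B)} (h : Shaped (nil :: β)) : β = [] := by
  obtain ⟨_ | ⟨b, bs⟩, hst, hbs⟩ := h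
  · simpa using hst
  · simp only [List.cons_append, List.cons.injEq] at hst
    exact absurd (hst.1 ▸ List.mem_cons_self) hbs

lemma step_content_of_step {c c' : Option (Block N B) × List (Block N B)} {a : T}
    (h : (toPDA R B s₀ e).Step c a c') : Step R (content s₀ c) a (content s₀ c') := by
  cases h with
  | push h =>
    obtain ⟨b, rfl, -, h⟩ := h
    simpa [content, stateList] using h.append_right (flatten (_ :: _))
  | repl h =>
    obtain ⟨rfl, b, rfl, h⟩ := h
    simpa [content, stateList] using h.append_right (flatten (_ :: _))
  | pop h =>
    obtain ⟨b, rfl, -, h⟩ := h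
    simpa [content, stateList] using h.append_right (flatten _)

lemma shaped_of_step {c c' : Option (Block N B) × List (Block N B)} {a : T}
    (h : (toPDA R B s₀ e).Step c a c') (hc : Shaped c.2) : Shaped c'.2 := by
  obtain ⟨bs, hst, hbs⟩ := hc
  cases h with
  | @push _ _ _ _ y _ h =>
    obtain ⟨-, -, hy, -⟩ := h
    exact ⟨y :: bs, by simpa using hst, by simp [hbs, Ne.symm hy]⟩
  | repl h =>
    obtain ⟨rfl, -⟩ := h
    exact ⟨bs, hst, hbs⟩
  | pop h =>
    obtain ⟨-, -, hx, -⟩ := h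
    obtain _ | ⟨b, bs⟩ := bs
    · simp_all
    · simp only [List.cons_append, List.cons.injEq] at hst
      exact ⟨bs, hst.2, fun h => hbs (List.mem_cons_of_mem _ h)⟩

lemma step_fst_ne_none {c c' : Option (Block N B) × List (Block N B)} {a : T}
    (h : (toPDA R B s₀ e).Step c a c') : c'.1 ≠ none := by
  cases h with
  | push h | pop h => obtain ⟨b, rfl, -⟩ := h; simp
  | repl h => obtain ⟨-, b, rfl, -⟩ := h; simp

lemma scans_eq_of_fst_eq_none {c c' : Option (Block N B) × List (Block N B)} {w : List T}
    (h : (toPDA R B s₀ e).Scans c w c') (hc' : c'.1 = none) : w = [] ∧ c = c' := by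
  induction h with
  | refl => exact ⟨rfl, rfl⟩
  | step hstep _ ih =>
    obtain ⟨-, rfl⟩ := ih hc'
    exact absurd hc' (step_fst_ne_none hstep)

lemma derives_of_scans {c c' : Option (Block N B) × List (Block N B)} {w : List T}
    (h : (toPDA R B s₀ e).Scans c w c') (hc : Shaped c.2) :
    Shaped c'.2 ∧ (content s₀ c' = [] → Derives R (content s₀ c) w) := by
  induction h with
  | refl => exact ⟨hc, fun h => h ▸ Derives.nil⟩
  | step hstep _ ih =>
    obtain ⟨hc', hder⟩ := ih (shaped_of_step hstep hc)
    exact ⟨hc', fun h => .head (step_content_of_step hstep) (hder h)⟩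

lemma length_le_of_stateList_eq_cons {q : Option (Block N B)} {s : N} {ut : List N}
    (h : stateList s₀ q = s :: ut) : ut.length + 1 ≤ B ∨ ut.length = 0 := by
  cases q with
  | none => simp [← (List.cons.inj h).2]
  | some b =>
    have := b.2
    simp only [stateList] at h
    simp [h] at this
    omega

lemma exists_rule_of_step {q : Option (Block N B)} {bs : List (Block N B)}
    (hq : stateList s₀ q = [] → bs = []) {a : T} {v : List N}
    (h : Step R (stateList s₀ q ++ flatten bs) a v) :
    ∃ s ut u, stateList s₀ q = s :: ut ∧ R s a u ∧ v = u ++ ut ++ flatten bs := by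
  cases hs : stateList s₀ q with
  | nil => rw [hs, hq hs] at h; cases h
  | cons s ut =>
    rw [hs, List.cons_append, step_cons_iff] at h
    obtain ⟨u, hu, rfl⟩ := h
    exact ⟨s, ut, u, rfl, hu, by simp⟩

/-- A derivation step is simulated by pushing what lies beyond the first `B` symbols of the new
state, by popping the top block into an emptied state, or else by changing the state alone. -/
lemma exists_step (hR : ∀ s a u, R s a u → u.length ≤ B) {q : Option (Block N B)}
    {bs : List (Block N B)} (hbs : nil ∉ bs) (hq : stateList s₀ q = [] → bs = [])
    {a : T} {v : List N} (h : Step R (stateList s₀ q ++ flatten bs) a v) :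
    ∃ b bs', (toPDA R B s₀ e).Step (q, bs ++ [nil]) a (some b, bs' ++ [nil]) ∧
      nil ∉ bs' ∧ (b.1 = [] → bs' = []) ∧ b.1 ++ flatten bs' = v := by
  obtain ⟨s, ut, u, hst, hu, rfl⟩ := exists_rule_of_step hq h
  have hstep : Step R (stateList s₀ q) a (u ++ ut) := hst ▸ Step.head hu
  have hu_len := hR _ _ _ hu
  have hut_len := length_le_of_stateList_eq_cons hst
  obtain ⟨x, β, hxβ⟩ := List.exists_cons_of_ne_nil (List.concat_ne_nil nil bs)
  by_cases hbig : B < (u ++ ut).length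
  · rw [List.length_append] at hbig
    let y : Block N B := ⟨(u ++ ut).drop B, by simp; omega⟩
    have hy : y ≠ nil := Block.ne_nil_iff.mpr (by simp [y]; omega)
    refine ⟨⟨(u ++ ut).take B, by simp⟩, y :: bs, ?_, by simp [hbs, Ne.symm hy], fun h => ?_,
      by simp [y, ← List.append_assoc]⟩
    · rw [List.cons_append, hxβ]
      exact .push ⟨_, rfl, hy, by simpa [y] using hstep⟩
    · rcases List.take_eq_nil_iff.mp h with hB | hnil
      · omega
      · obtain ⟨rfl, rfl⟩ := List.append_eq_nil_iff.mp hnil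
        simp at hbig
  by_cases hpop : u ++ ut = [] ∧ bs ≠ []
  · obtain ⟨hnil, hbs_ne⟩ := hpop
    obtain ⟨rfl, rfl⟩ := List.append_eq_nil_iff.mp hnil
    obtain _ | ⟨c, bs⟩ := bs
    · exact absurd rfl hbs_ne
    have hc : c ≠ nil := fun h => hbs (h ▸ List.mem_cons_self)
    refine ⟨c, bs, .pop ⟨c, rfl, hc, ?_⟩, fun h => hbs (List.mem_cons_of_mem _ h),
      fun h => absurd h (Block.ne_nil_iff.mp hc), by simp⟩
    simpa [hst] using Step.head (v := c.1) hu
  · refine ⟨⟨u ++ ut, by omega⟩, bs, ?_, hbs, fun h => by tauto, by simp⟩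
    rw [hxβ]
    exact .repl ⟨rfl, _, rfl, hstep⟩

lemma exists_scans (hR : ∀ s a u, R s a u → u.length ≤ B) {v : List N} {w : List T}
    (h : Derives R v w) {q : Option (Block N B)} {bs : List (Block N B)} (hbs : nil ∉ bs)
    (hq : stateList s₀ q = [] → bs = []) (hv : stateList s₀ q ++ flatten bs = v) :
    ∃ b : Block N B, b.1 = [] ∧ (toPDA R B s₀ e).Scans (q, bs ++ [nil]) w (some b, [nil]) := by
  induction h generalizing q bs with
  | nil =>
    obtain ⟨hq_nil, -⟩ := List.append_eq_nil_iff.mp hv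
    obtain rfl := hq hq_nil
    cases q with
    | none => simp [stateList] at hq_nil
    | some b => exact ⟨b, hq_nil, .refl _⟩
  | head hstep _ ih =>
    obtain ⟨b, bs', hstep', hbs', hb, rfl⟩ := exists_step hR hbs hq (hv ▸ hstep)
    obtain ⟨b', hb', hscans⟩ := ih (q := some b) hbs' hb rfl
    exact ⟨b', hb', .step hstep' hscans⟩

theorem language_toPDA (hR : ∀ s a u, R s a u → u.length ≤ B) :
    (toPDA R B s₀ e).language = {w | w = [] ∧ e ∨ Derives R [s₀] w} := by
  ext w
  constructor
  · rintro ⟨r, hr, β, hscans⟩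
    cases r with
    | none =>
      obtain ⟨rfl, -⟩ := scans_eq_of_fst_eq_none hscans rfl
      exact Or.inl ⟨rfl, hr⟩
    | some b =>
      obtain ⟨hshaped, hder⟩ := derives_of_scans hscans ⟨[], rfl, List.not_mem_nil⟩
      obtain rfl := Shaped.eq_nil_of_cons_nil hshaped
      exact Or.inr (hder (by simpa [content, stateList, toPDA, nil] using hr))
  · rintro (⟨rfl, he⟩ | hder)
    · exact ⟨none, he, [], .refl _⟩
    · obtain ⟨b, hb, hscans⟩ := exists_scans hR hder (s₀ := s₀) (q := none) List.not_mem_nil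
        (by simp [stateList]) (by simp [stateList])
      exact ⟨some b, hb, [], hscans⟩

end GNF

namespace ContextFreeRule

variable {T N : Type*} {r : ContextFreeRule T N}

lemma Rewrites.append_split {x y v : List (Symbol T N)} (h : r.Rewrites (x ++ y) v) :
    (∃ x', r.Rewrites x x' ∧ v = x' ++ y) ∨ ∃ y', r.Rewrites y y' ∧ v = x ++ y' := by
  induction x generalizing v with
  | nil => exact .inr ⟨v, h, rfl⟩
  | cons s x ih =>
    cases h with
    | head => exact .inl ⟨_, .head x, by simp⟩
    | cons _ h =>
      rcases ih h with ⟨x', hx, rfl⟩ | ⟨y', hy, rfl⟩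
      · exact .inl ⟨s :: x', hx.cons s, rfl⟩
      · exact .inr ⟨y', hy, rfl⟩

end ContextFreeRule

namespace ContextFreeGrammar

open Symbol

variable {T : Type} {g : ContextFreeGrammar T}

lemma Produces.append_split {x y v : List (Symbol T g.NT)} (h : g.Produces (x ++ y) v) :
    (∃ x', g.Produces x x' ∧ v = x' ++ y) ∨ ∃ y', g.Produces y y' ∧ v = x ++ y' := by
  obtain ⟨r, hr, hrw⟩ := h
  rcases hrw.append_split with ⟨x', hx, rfl⟩ | ⟨y', hy, rfl⟩
  · exact .inl ⟨x', ⟨r, hr, hx⟩, rfl⟩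
  · exact .inr ⟨y', ⟨r, hr, hy⟩, rfl⟩

lemma produces_singleton {C : g.NT} {v : List (Symbol T g.NT)}
    (h : g.Produces [nonterminal C] v) : ⟨C, v⟩ ∈ g.rules := by
  obtain ⟨r, hr, hrw⟩ := h
  cases hrw with
  | head => simpa using hr
  | cons _ h => cases h

lemma eq_nil_of_derives_nil {w : List (Symbol T g.NT)} (h : g.Derives [] w) : w = [] := by
  rcases h.cases_head with rfl | ⟨v, ⟨r, -, hrw⟩, -⟩
  · rfl
  · cases hrw

lemma eq_of_derives_terminal {a : T} {w : List (Symbol T g.NT)}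
    (h : g.Derives [terminal a] w) : w = [terminal a] := by
  rcases h.cases_head with rfl | ⟨v, ⟨r, -, hrw⟩, -⟩
  · rfl
  · cases hrw with
    | cons _ h => cases h

lemma Derives.append {x x' y y' : List (Symbol T g.NT)} (hx : g.Derives x x')
    (hy : g.Derives y y') : g.Derives (x ++ y) (x' ++ y') :=
  (hx.append_right y).trans (hy.append_left x')

variable (g) in
inductive DerivesIn : ℕ → List (Symbol T g.NT) → List (Symbol T g.NT) → Prop
  | refl (u : List (Symbol T g.NT)) : DerivesIn 0 u u
  | head {n : ℕ} {u v w : List (Symbol T g.NT)} : g.Produces u v → DerivesIn n v w →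
      DerivesIn (n + 1) u w

lemma DerivesIn.derives {n : ℕ} {u w : List (Symbol T g.NT)} (h : g.DerivesIn n u w) :
    g.Derives u w := by
  induction h with
  | refl => exact .refl _
  | head hp _ ih => exact hp.trans_derives ih

lemma Derives.exists_derivesIn {u w : List (Symbol T g.NT)} (h : g.Derives u w) :
    ∃ n, g.DerivesIn n u w := by
  induction h using Relation.ReflTransGen.head_induction_on with
  | refl => exact ⟨0, .refl _⟩
  | head hp _ ih =>
    obtain ⟨n, h⟩ := ih
    exact ⟨n + 1, .head hp h⟩

lemma DerivesIn.append_split {n : ℕ} {x y w : List (Symbol T g.NT)}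
    (h : g.DerivesIn n (x ++ y) w) : ∃ w₁ w₂ n₁ n₂, w = w₁ ++ w₂ ∧ g.DerivesIn n₁ x w₁ ∧
      g.DerivesIn n₂ y w₂ ∧ n₁ + n₂ = n := by
  generalize hxy : x ++ y = u at h
  induction h generalizing x y with
  | refl => exact ⟨x, y, 0, 0, hxy.symm, .refl x, .refl y, rfl⟩
  | head hp _ ih =>
    subst hxy
    rcases hp.append_split with ⟨x', hx, rfl⟩ | ⟨y', hy, rfl⟩
    · obtain ⟨w₁, w₂, n₁, n₂, rfl, h₁, h₂, rfl⟩ := ih rfl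
      exact ⟨w₁, w₂, n₁ + 1, n₂, rfl, .head hx h₁, h₂, by omega⟩
    · obtain ⟨w₁, w₂, n₁, n₂, rfl, h₁, h₂, rfl⟩ := ih rfl
      exact ⟨w₁, w₂, n₁, n₂ + 1, rfl, h₁, .head hy h₂, by omega⟩

lemma Derives.append_split {x y w : List (Symbol T g.NT)} (h : g.Derives (x ++ y) w) :
    ∃ w₁ w₂, w = w₁ ++ w₂ ∧ g.Derives x w₁ ∧ g.Derives y w₂ := by
  obtain ⟨n, h⟩ := h.exists_derivesIn
  obtain ⟨w₁, w₂, _, _, rfl, h₁, h₂, -⟩ := h.append_split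
  exact ⟨w₁, w₂, rfl, h₁.derives, h₂.derives⟩

variable (g) in
def languageOf (μ : List (Symbol T g.NT)) : Language T :=
  {w | g.Derives μ (w.map terminal)}

@[simp] lemma mem_languageOf {μ : List (Symbol T g.NT)} {w : List T} :
    w ∈ g.languageOf μ ↔ g.Derives μ (w.map terminal) := Iff.rfl

lemma languageOf_nil : g.languageOf [] = 1 := by
  ext w
  refine ⟨fun h => ?_, fun h => ?_⟩
  · exact (Language.mem_one w).mpr (List.map_eq_nil_iff.mp (eq_nil_of_derives_nil h))
  · rw [(Language.mem_one w).mp h]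
    exact Derives.refl _

lemma languageOf_append (x y : List (Symbol T g.NT)) :
    g.languageOf (x ++ y) = g.languageOf x * g.languageOf y := by
  ext w
  constructor
  · intro h
    obtain ⟨w₁, w₂, hw, h₁, h₂⟩ := Derives.append_split h
    obtain ⟨z₁, z₂, rfl, rfl, rfl⟩ := List.map_eq_append_iff.mp hw
    exact Language.append_mem_mul h₁ h₂
  · rintro ⟨z₁, h₁, z₂, h₂, rfl⟩
    show g.Derives _ _
    simpa using Derives.append h₁ h₂

variable (g) in
/-- `g.Spine σ τ w`: a path `σ = Z₀, …, Zₖ = τ` in a derivation tree along rules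
`Zᵢ → νᵢ Zᵢ₊₁ μᵢ` with every `νᵢ` nullable, where `μᵢ` derives `wᵢ` and `w = wₖ₋₁ ⋯ w₀`. -/
inductive Spine : Symbol T g.NT → Symbol T g.NT → List T → Prop
  | refl (σ : Symbol T g.NT) : Spine σ σ []
  | snoc {σ τ : Symbol T g.NT} {Z : g.NT} {ν μ : List (Symbol T g.NT)} {u v : List T} :
      Spine σ (nonterminal Z) u → ⟨Z, ν ++ τ :: μ⟩ ∈ g.rules → g.Derives ν [] →
      v ∈ g.languageOf μ → Spine σ τ (v ++ u)

lemma derives_of_mem_rules {Z : g.NT} {ν μ : List (Symbol T g.NT)} {τ : Symbol T g.NT}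
    (hr : ⟨Z, ν ++ τ :: μ⟩ ∈ g.rules) (hν : g.Derives ν []) {v : List T}
    (hμ : v ∈ g.languageOf μ) : g.Derives [nonterminal Z] (τ :: v.map terminal) :=
  Produces.trans_derives ⟨_, hr, ContextFreeRule.Rewrites.input_output⟩
    (by simpa using hν.append (hμ.append_left [τ]))

lemma Spine.derives {σ τ : Symbol T g.NT} {w : List T} (h : g.Spine σ τ w) :
    g.Derives [σ] (τ :: w.map terminal) := by
  induction h with
  | refl => exact .refl _
  | snoc _ hr hν hμ ih =>
    simpa using ih.trans ((derives_of_mem_rules hr hν hμ).append_right _)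

lemma Spine.cons {ρ τ : Symbol T g.NT} {u : List T} (h : g.Spine ρ τ u) {C : g.NT}
    {ν μ : List (Symbol T g.NT)} (hr : ⟨C, ν ++ ρ :: μ⟩ ∈ g.rules) (hν : g.Derives ν [])
    {v : List T} (hμ : v ∈ g.languageOf μ) : g.Spine (nonterminal C) τ (u ++ v) := by
  induction h with
  | refl => simpa using Spine.snoc (.refl _) hr hν hμ
  | snoc _ hr' hν' hμ' ih => simpa using ih.snoc hr' hν' hμ'

lemma DerivesIn.exists_spine {n : ℕ} {η : List (Symbol T g.NT)} {a : T} {z : List T}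
    (h : g.DerivesIn n η ((a :: z).map terminal)) :
    ∃ ν ρ μ z₁ z₂, η = ν ++ ρ :: μ ∧ g.Derives ν [] ∧ g.Spine ρ (terminal a) z₁ ∧
      z₂ ∈ g.languageOf μ ∧ z = z₁ ++ z₂ := by
  induction n using Nat.strong_induction_on generalizing η a z with
  | _ n ihn =>
  -- a derivation from a nonterminal starts with a rule whose right side needs fewer steps
  have hsingle {m : ℕ} {σ : Symbol T g.NT} {a : T} {z : List T} (hm : m ≤ n)
      (h : g.DerivesIn m [σ] ((a :: z).map terminal)) : g.Spine σ (terminal a) z := by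
    cases σ with
    | terminal b =>
      have := eq_of_derives_terminal h.derives
      simp only [List.map_cons, List.cons.injEq, terminal.injEq, List.map_eq_nil_iff] at this
      obtain ⟨rfl, rfl⟩ := this
      exact .refl _
    | nonterminal C =>
      obtain _ | ⟨hp, h⟩ := h
      obtain ⟨ν, ρ, μ, z₁, z₂, rfl, hν, hρ, hμ, rfl⟩ := ihn _ (by omega) h
      exact hρ.cons (produces_singleton hp) hν hμ
  suffices ∀ m ≤ n, ∀ {η : List (Symbol T g.NT)} {z : List T},
      g.DerivesIn m η ((a :: z).map terminal) → ∃ ν ρ μ z₁ z₂, η = ν ++ ρ :: μ ∧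
        g.Derives ν [] ∧ g.Spine ρ (terminal a) z₁ ∧ z₂ ∈ g.languageOf μ ∧ z = z₁ ++ z₂ from
    this n le_rfl h
  intro m hm η z h
  induction η generalizing m z with
  | nil => cases eq_nil_of_derives_nil h.derives
  | cons σ η ihη =>
    obtain ⟨w₁, w₂, n₁, n₂, hw, h₁, h₂, rfl⟩ := DerivesIn.append_split (x := [σ]) h
    obtain ⟨_ | ⟨b, t₁⟩, t₂, ht, rfl, rfl⟩ := List.map_eq_append_iff.mp hw
    · rw [List.nil_append] at ht
      subst ht
      obtain ⟨ν, ρ, μ, z₁, z₂, rfl, hν, hρ, hμ, rfl⟩ := ihη n₂ (by omega) h₂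
      exact ⟨σ :: ν, ρ, μ, z₁, z₂, rfl, by simpa using h₁.derives.append hν, hρ, hμ, rfl⟩
    · obtain ⟨rfl, rfl⟩ := List.cons.inj ht
      exact ⟨[], σ, η, t₁, t₂, rfl, .refl _, hsingle (by omega) h₁, h₂.derives, rfl⟩

lemma Derives.exists_spine {η : List (Symbol T g.NT)} {a : T} {z : List T}
    (h : g.Derives η ((a :: z).map terminal)) :
    ∃ ν ρ μ z₁ z₂, η = ν ++ ρ :: μ ∧ g.Derives ν [] ∧ g.Spine ρ (terminal a) z₁ ∧
      z₂ ∈ g.languageOf μ ∧ z = z₁ ++ z₂ :=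
  let ⟨_, h⟩ := h.exists_derivesIn
  h.exists_spine

lemma spine_of_derives_singleton {σ : Symbol T g.NT} {a : T} {z : List T}
    (h : g.Derives [σ] ((a :: z).map terminal)) : g.Spine σ (terminal a) z := by
  obtain ⟨ν, ρ, μ, z₁, z₂, hη, -, hρ, hμ, rfl⟩ := h.exists_spine
  obtain ⟨rfl, rfl, rfl⟩ : ν = [] ∧ ρ = σ ∧ μ = [] := by
    obtain _ | ⟨_, _ | _⟩ := ν <;> simp_all
  rw [languageOf_nil, Language.mem_one] at hμ
  simpa [hμ] using hρ

variable (g) in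
def symbols : Set (Symbol T g.NT) :=
  insert (nonterminal g.initial) (⋃ r ∈ g.rules, insert (nonterminal r.input) {σ | σ ∈ r.output})

instance : Finite g.symbols :=
  ((g.rules.finite_toSet.biUnion fun r _ => r.output.finite_toSet.insert _).insert _).to_subtype

lemma initial_mem_symbols : nonterminal g.initial ∈ g.symbols := Set.mem_insert _ _

lemma input_mem_symbols {r : ContextFreeRule T g.NT} (hr : r ∈ g.rules) :
    nonterminal r.input ∈ g.symbols :=
  Set.mem_insert_of_mem _ (Set.mem_biUnion hr (Set.mem_insert _ _))

lemma mem_symbols_of_mem_output {r : ContextFreeRule T g.NT} (hr : r ∈ g.rules)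
    {σ : Symbol T g.NT} (hσ : σ ∈ r.output) : σ ∈ g.symbols :=
  Set.mem_insert_of_mem _ (Set.mem_biUnion hr (Set.mem_insert_of_mem _ hσ))

variable (g) in
def maxOutputLength : ℕ := g.rules.sup fun r => r.output.length

lemma length_output_le {r : ContextFreeRule T g.NT} (hr : r ∈ g.rules) :
    r.output.length ≤ g.maxOutputLength :=
  Finset.le_sup (f := fun r => r.output.length) hr

variable (g) in
def spineLang (σ τ : Symbol T g.NT) : Language T := {w | g.Spine σ τ w}

@[simp] lemma mem_spineLang {σ τ : Symbol T g.NT} {w : List T} :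
    w ∈ g.spineLang σ τ ↔ g.Spine σ τ w := Iff.rfl

variable (g) in
/-- `inl σ` stands for the nonempty words derived from `σ` and `inr (σ, τ)` for the nonempty
words of `g.spineLang σ τ`. -/
abbrev Item : Type := g.symbols ⊕ g.symbols × g.symbols

variable (g) in
def itemLang : g.Item → Language T
  | .inl σ => g.languageOf [σ.1] - 1
  | .inr (σ, τ) => g.spineLang σ.1 τ.1 - 1

lemma nil_not_mem_itemLang (s : g.Item) : [] ∉ g.itemLang s := by
  cases s <;> simp [itemLang, Language.mem_sub, Language.mem_one]

lemma languageOf_mul_spineLang_le {σ τ : Symbol T g.NT} {Z : g.NT} {ν μ : List (Symbol T g.NT)}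
    (hr : ⟨Z, ν ++ τ :: μ⟩ ∈ g.rules) (hν : g.Derives ν []) :
    g.languageOf μ * g.spineLang σ (nonterminal Z) ≤ g.spineLang σ τ := by
  rintro _ ⟨v, hv, u, hu, rfl⟩
  exact Spine.snoc hu hr hν hv

lemma prodCover_languageOf {μ : List (Symbol T g.NT)} (hμ : ∀ σ ∈ μ, σ ∈ g.symbols) {w : List T}
    (hw : w ∈ g.languageOf μ) : ProdCover g.itemLang μ.length (g.languageOf μ) w := by
  induction μ generalizing w with
  | nil =>
    rw [languageOf_nil, Language.mem_one] at hw
    subst hw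
    exact ProdCover.nil (by simp [languageOf_nil, Language.mem_one])
  | cons σ μ ih =>
    rw [← List.singleton_append, languageOf_append] at hw ⊢
    obtain ⟨w₁, hw₁, w₂, hw₂, rfl⟩ := hw
    have hσ : σ ∈ g.symbols := hμ σ List.mem_cons_self
    have h₁ := prodCover_one (ℒ := g.itemLang) (n := .inl ⟨σ, hσ⟩) rfl hw₁
    exact (h₁.append (ih (fun τ hτ => hμ τ (List.mem_cons_of_mem _ hτ)) hw₂)).mono
      (by simp; omega) fun _ => id

lemma prodCover_spineLang {σ τ : Symbol T g.NT} (hσ : σ ∈ g.symbols) (hτ : τ ∈ g.symbols)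
    {w : List T} (hw : w ∈ g.spineLang σ τ) : ProdCover g.itemLang 1 (g.spineLang σ τ) w :=
  prodCover_one (ℒ := g.itemLang) (n := .inr (⟨σ, hσ⟩, ⟨τ, hτ⟩)) rfl hw

lemma prodCover_spineLang_terminal {σ : Symbol T g.NT} (hσ : σ ∈ g.symbols) {a : T} {z : List T}
    (h : g.Spine σ (terminal a) z) :
    ProdCover g.itemLang (g.maxOutputLength + 1) (g.spineLang σ (terminal a)) z := by
  cases h with
  | refl => exact ProdCover.nil (Spine.refl _)
  | snoc h hr hν hμ =>
    have hμ_len := length_output_le hr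
    simp only [List.length_append, List.length_cons] at hμ_len
    exact ((prodCover_languageOf (fun _ h => mem_symbols_of_mem_output hr (by simp [h])) hμ).append
      (prodCover_spineLang hσ (input_mem_symbols hr) h)).mono (by omega)
      fun _ h => languageOf_mul_spineLang_le hr hν h

lemma prodCover_leftQuotient_languageOf {μ : List (Symbol T g.NT)}
    (hμ : ∀ σ ∈ μ, σ ∈ g.symbols) {a : T} {v : List T} (h : a :: v ∈ g.languageOf μ) :
    ProdCover g.itemLang (μ.length + g.maxOutputLength + 1) ((g.languageOf μ).leftQuotient [a])
      v := by
  obtain ⟨ν, ρ, μ₂, v₁, v₂, rfl, hν, hρ, hμ₂, rfl⟩ := Derives.exists_spine h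
  refine ((prodCover_spineLang_terminal (hμ ρ (by simp)) hρ).append
    (prodCover_languageOf (fun σ h => hμ σ (by simp [h])) hμ₂)).mono (by simp; omega) ?_
  rintro _ ⟨v₁, hv₁, v₂, hv₂, rfl⟩
  simpa using hν.append (hv₁.derives.append hv₂)

/-- The letter `a` is contributed by the lowest rule `Z → ν τ' μ` of the spine whose `μ` derives a
nonempty word: the rest of that word needs at most `|μ| + M + 1` items, the spine above `Z` one. -/
lemma prodCover_leftQuotient_spineLang {σ τ : Symbol T g.NT} (hσ : σ ∈ g.symbols) {a : T}
    {z : List T} (h : g.Spine σ τ (a :: z)) :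
    ProdCover g.itemLang (2 * g.maxOutputLength + 2) ((g.spineLang σ τ).leftQuotient [a]) z := by
  generalize hw : a :: z = w at h
  induction h generalizing z with
  | refl => cases hw
  | @snoc τ Z ν μ u v hu hr hν hμ ih =>
    have hμ_len := length_output_le hr
    simp only [List.length_append, List.length_cons] at hμ_len
    obtain _ | ⟨b, v⟩ := v
    · exact (ih hw).mono le_rfl fun z' hz' => by simpa using Spine.snoc hz' hr hν hμ
    · obtain ⟨rfl, rfl⟩ := List.cons.inj hw
      refine ((prodCover_leftQuotient_languageOf
        (fun _ h => mem_symbols_of_mem_output hr (by simp [h])) hμ).append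
        (prodCover_spineLang hσ (input_mem_symbols hr) hu)).mono (by omega) ?_
      rintro _ ⟨v', hv', u', hu', rfl⟩
      exact Spine.snoc (v := a :: v') hu' hr hν hv'

theorem prodCover_leftQuotient_itemLang (s : g.Item) {a : T} {z : List T}
    (h : a :: z ∈ g.itemLang s) :
    ProdCover g.itemLang (2 * g.maxOutputLength + 2) ((g.itemLang s).leftQuotient [a]) z := by
  rcases s with σ | ⟨σ, τ⟩
  · have hσ := spine_of_derives_singleton ((Language.mem_sub _ _ _).mp h).1
    refine (prodCover_spineLang_terminal σ.2 hσ).mono (by omega) fun z' hz' => ?_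
    rw [Language.mem_leftQuotient, itemLang, Language.mem_sub]
    exact ⟨hz'.derives, by simp [Language.mem_one]⟩
  · refine (prodCover_leftQuotient_spineLang σ.2 ((Language.mem_sub _ _ _).mp h).1).mono le_rfl
      fun z' hz' => ?_
    rw [Language.mem_leftQuotient, itemLang, Language.mem_sub]
    exact ⟨hz', by simp [Language.mem_one]⟩

lemma languageOf_initial : g.languageOf [nonterminal g.initial] = g.language := rfl

theorem derives_quotientRules_itemLang_iff {w : List T} :
    GNF.Derives (GNF.quotientRules g.itemLang (2 * g.maxOutputLength + 2))
      [.inl ⟨_, initial_mem_symbols⟩] w ↔ w ∈ g.language ∧ w ≠ [] := by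
  rw [GNF.derives_quotientRules_iff nil_not_mem_itemLang prodCover_leftQuotient_itemLang]
  simp [itemLang, languageOf_initial, Language.mem_sub, Language.mem_one]

end ContextFreeGrammar

/-- Every context-free language is recognized by a restricted PDA; in particular, every
context-free language is recognized by a real-time nondeterministic pushdown automaton
(one in which every transition scans exactly one input symbol). -/
theorem isContextFree_iff_exists_restrictedPDA {T : Type} (L : Language T)
    (hL : L.IsContextFree) :
    ∃ (Q S : Type) (_ : Fintype Q) (_ : Fintype S) (M : RestrictedPDA Q T S),
      M.language = L := by
  obtain ⟨g, rfl⟩ := hL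
  let B := 2 * g.maxOutputLength + 2
  refine ⟨_, _, Fintype.ofFinite _, Fintype.ofFinite _,
    GNF.toPDA (GNF.quotientRules g.itemLang B) B (.inl ⟨_, ContextFreeGrammar.initial_mem_symbols⟩)
      ([] ∈ g.language), ?_⟩
  rw [GNF.language_toPDA fun _ _ _ h => h.1]
  ext w
  show _ ∨ _ ↔ _
  rw [ContextFreeGrammar.derives_quotientRules_itemLang_iff]
  rcases eq_or_ne w [] with rfl | hw <;> simp [*]
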